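/- arXiv:1001.4632 — 2 statements merged into one kernel-verified Lean document; each statement's English description precedes it below -/
import Mathlib

section
/- Let H, K : ℝ^{2n} × ℝ → ℝ be continuously differentiable, and let F, G : ℝ^{2n} × ℝ → ℝ^{2n} be continuously differentiable maps such that: for each t, f_t := F(·,t) is a bijection of ℝ^{2n} with continuously differentiable inverse f_t⁻¹ and the Jacobian matrix D_z F(z,t) is symplectic for every z; ∂_t F(z,t) = J∇_z H(F(z,t), t) for all (z,t) (F is the flow of H); and ∂_t G(z,t) = J∇_z K(G(z,t), t) for all (z,t) (G is the flow of K). Define (H#K)(z,t) := H(z,t) + K(f_t⁻¹(z), t). Then the composed family h_t := f_t ∘ g_t (where g_t := G(·,t)) is the Hamiltonian flow of H#K, i.e. ∂_t [F(G(z,t), t)] = J∇_z (H#K)( F(G(z,t),t), t ) for all (z,t). -/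
/-!
By the chain rule, `∂ₜ f_t(g_t z) = Df_t(g_t z) J∇K(g_t z) + J∇H(f_t g_t z)`. On the other
side, `∇(K ∘ f_t⁻¹)(w) = (Df_t⁻¹(w))ᵀ ∇K(f_t⁻¹ w)`, and since `A = Df_t` is symplectic with left
inverse `B = Df_t⁻¹`, we get `A J = A J Aᵀ Bᵀ = J Bᵀ`. Hence `J∇(H#K)` is the sum of the same
two terms.
-/

open Matrix
open scoped RealInnerProductSpace

noncomputable section

/-- Phase space ℝ^{2n}, with coordinates indexed by `Fin n ⊕ Fin n` (the `x` and `p` blocks). -/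
abbrev Phase (n : ℕ) := EuclideanSpace ℝ (Fin n ⊕ Fin n)

/-- The standard symplectic matrix `J = [[0, Iₙ],[−Iₙ, 0]]`. -/
def Jmat (n : ℕ) : Matrix (Fin n ⊕ Fin n) (Fin n ⊕ Fin n) ℝ :=
  Matrix.fromBlocks 0 1 (-1) 0

/-- The linear map `z ↦ Jz` on phase space. -/
def Jv {n : ℕ} (v : Phase n) : Phase n := WithLp.toLp 2 ((Jmat n).mulVec v)

/-- The Jacobian matrix of a map of phase space at a point. -/
def jacMat {n : ℕ} (f : Phase n → Phase n) (z : Phase n) :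
    Matrix (Fin n ⊕ Fin n) (Fin n ⊕ Fin n) ℝ :=
  LinearMap.toMatrix (EuclideanSpace.basisFun _ ℝ).toBasis
    (EuclideanSpace.basisFun _ ℝ).toBasis (fderiv ℝ f z).toLinearMap

section TimeDependent

variable {E F : Type*} [NormedAddCommGroup E] [NormedSpace ℝ E]
  [NormedAddCommGroup F] [NormedSpace ℝ F]

lemma DifferentiableAt.comp_prodMk_const {f : E → ℝ → F} {x : E} {t : ℝ}
    (hf : DifferentiableAt ℝ (fun q : E × ℝ => f q.1 q.2) (x, t)) :
    DifferentiableAt ℝ (fun y => f y t) x :=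
  hf.comp (f := fun y => (y, t)) x (differentiableAt_id.prodMk (differentiableAt_const t))

lemma HasDerivAt.comp_timeDependent {f : E → ℝ → F} {γ : ℝ → E} {γ' : E} {ft : F} {t : ℝ}
    (hf : DifferentiableAt ℝ (fun q : E × ℝ => f q.1 q.2) (γ t, t))
    (hγ : HasDerivAt γ γ' t) (hft : HasDerivAt (f (γ t)) ft t) :
    HasDerivAt (fun s => f (γ s) s) (fderiv ℝ (fun y => f y t) (γ t) γ' + ft) t := by
  set Φ' := fderiv ℝ (fun q : E × ℝ => f q.1 q.2) (γ t, t)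
  have hspace : fderiv ℝ (fun y => f y t) (γ t) = Φ'.comp (ContinuousLinearMap.inl ℝ E ℝ) :=
    (hf.hasFDerivAt.comp (f := fun y => (y, t)) (γ t) (hasFDerivAt_prodMk_left (γ t) t)).fderiv
  have htime : Φ' (0, 1) = ft :=
    (hf.hasFDerivAt.comp_hasDerivAt_of_eq t
      ((hasDerivAt_const t (γ t)).prodMk (hasDerivAt_id t)) rfl).unique hft
  have hcurve : HasDerivAt (fun s => f (γ s) s) (Φ' (γ', 1)) t :=
    hf.hasFDerivAt.comp_hasDerivAt_of_eq t (hγ.prodMk (hasDerivAt_id t)) rfl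
  convert hcurve using 1
  rw [hspace, ← htime, ContinuousLinearMap.comp_apply, ← map_add]
  simp

end TimeDependent

lemma HasGradientAt.add {𝕜 E : Type*} [RCLike 𝕜] [NormedAddCommGroup E] [InnerProductSpace 𝕜 E]
    [CompleteSpace E] {f g : E → 𝕜} {f' g' x : E} (hf : HasGradientAt f f' x)
    (hg : HasGradientAt g g' x) : HasGradientAt (fun y => f y + g y) (f' + g') x := by
  rw [hasGradientAt_iff_hasFDerivAt] at hf hg ⊢
  rw [map_add]
  exact hf.add hg

section PhaseSpace

variable {n : ℕ}

/-- The symplectic condition is invariant under `J ↦ -J`, so Mathlib's `symplecticGroup` applies. -/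
lemma Jmat_eq_neg_J : Jmat n = -Matrix.J (Fin n) ℝ := by
  simp [Jmat, Matrix.J, Matrix.fromBlocks_neg]

lemma mul_Jmat_mul_transpose {A : Matrix (Fin n ⊕ Fin n) (Fin n ⊕ Fin n) ℝ}
    (hA : Aᵀ * Jmat n * A = Jmat n) : A * Jmat n * Aᵀ = Jmat n := by
  have hmem : A ∈ Matrix.symplecticGroup (Fin n) ℝ :=
    SymplecticGroup.mem_iff'.2 (by simpa [Jmat_eq_neg_J] using hA)
  simpa [Jmat_eq_neg_J] using SymplecticGroup.mem_iff.1 hmem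

lemma mul_Jmat_eq_Jmat_mul_transpose {A B : Matrix (Fin n ⊕ Fin n) (Fin n ⊕ Fin n) ℝ}
    (hA : Aᵀ * Jmat n * A = Jmat n) (hBA : B * A = 1) : A * Jmat n = Jmat n * Bᵀ := by
  calc A * Jmat n = A * Jmat n * (B * A)ᵀ := by rw [hBA, transpose_one, Matrix.mul_one]
    _ = A * Jmat n * Aᵀ * Bᵀ := by rw [transpose_mul, Matrix.mul_assoc (A * Jmat n)]
    _ = Jmat n * Bᵀ := by rw [mul_Jmat_mul_transpose hA]

lemma jacMat_mulVec (f : Phase n → Phase n) (z v : Phase n) :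
    jacMat f z *ᵥ v = fderiv ℝ f z v :=
  LinearMap.toMatrix_mulVec_repr _ _ (fderiv ℝ f z).toLinearMap v

lemma jacMat_comp {f g : Phase n → Phase n} {z : Phase n}
    (hg : DifferentiableAt ℝ g (f z)) (hf : DifferentiableAt ℝ f z) :
    jacMat (g ∘ f) z = jacMat g (f z) * jacMat f z := by
  rw [jacMat, fderiv_comp z hg hf, ContinuousLinearMap.toLinearMap_comp,
    LinearMap.toMatrix_comp _ (EuclideanSpace.basisFun _ ℝ).toBasis]
  rfl

lemma jacMat_id (z : Phase n) : jacMat id z = 1 := by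
  rw [jacMat, fderiv_id]
  exact LinearMap.toMatrix_id (EuclideanSpace.basisFun _ ℝ).toBasis

lemma HasGradientAt.comp_jacMat {K : Phase n → ℝ} {f : Phase n → Phase n}
    {z g : Phase n} (hK : HasGradientAt K g (f z)) (hf : DifferentiableAt ℝ f z) :
    HasGradientAt (K ∘ f) (WithLp.toLp 2 ((jacMat f z)ᵀ *ᵥ g)) z := by
  rw [hasGradientAt_iff_hasFDerivAt] at hK ⊢
  have hdual : InnerProductSpace.toDual ℝ (Phase n) (WithLp.toLp 2 ((jacMat f z)ᵀ *ᵥ g)) =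
      (InnerProductSpace.toDual ℝ (Phase n) g).comp (fderiv ℝ f z) := by
    ext v
    rw [InnerProductSpace.toDual_apply_apply, ContinuousLinearMap.comp_apply,
      InnerProductSpace.toDual_apply_apply, EuclideanSpace.inner_eq_star_dotProduct,
      EuclideanSpace.inner_eq_star_dotProduct, ← jacMat_mulVec]
    simp [Matrix.dotProduct_mulVec, Matrix.vecMul_transpose, dotProduct_comm]
  rw [hdual]
  exact hK.comp z hf.hasFDerivAt

lemma Jv_add (u v : Phase n) : Jv (u + v) = Jv u + Jv v := by
  simp [Jv, Matrix.mulVec_add]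

lemma Jv_toLp_transpose_mulVec {A B : Matrix (Fin n ⊕ Fin n) (Fin n ⊕ Fin n) ℝ}
    (hA : Aᵀ * Jmat n * A = Jmat n) (hBA : B * A = 1) (v : Phase n) :
    Jv (WithLp.toLp 2 (Bᵀ *ᵥ v)) = WithLp.toLp 2 (A *ᵥ Jv v) := by
  simp only [Jv, mulVec_mulVec, mul_Jmat_eq_Jmat_mul_transpose hA hBA]

end PhaseSpace

theorem composition_of_hamiltonian_flows_general {n : ℕ}
    (H K : Phase n → ℝ → ℝ)
    (hH : ContDiff ℝ 1 (fun q : Phase n × ℝ => H q.1 q.2))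
    (hK : ContDiff ℝ 1 (fun q : Phase n × ℝ => K q.1 q.2))
    (F G : Phase n → ℝ → Phase n)
    (hF : ContDiff ℝ 1 (fun q : Phase n × ℝ => F q.1 q.2))
    (Finv : Phase n → ℝ → Phase n)
    (hFinv : ∀ t, ContDiff ℝ 1 (fun z => Finv z t))
    (hinv₁ : ∀ (z : Phase n) (t : ℝ), Finv (F z t) t = z)
    (hsymp : ∀ (z : Phase n) (t : ℝ),
      (jacMat (fun w => F w t) z)ᵀ * Jmat n * jacMat (fun w => F w t) z = Jmat n)
    (hflowF : ∀ (z : Phase n) (t : ℝ),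
      HasDerivAt (fun s => F z s) (Jv (gradient (fun w => H w t) (F z t))) t)
    (hflowG : ∀ (z : Phase n) (t : ℝ),
      HasDerivAt (fun s => G z s) (Jv (gradient (fun w => K w t) (G z t))) t)
    (HK : Phase n → ℝ → ℝ)
    (hHK : ∀ (z : Phase n) (t : ℝ), HK z t = H z t + K (Finv z t) t) :
    ∀ (z : Phase n) (t : ℝ),
      HasDerivAt (fun s => F (G z s) s)
        (Jv (gradient (fun w => HK w t) (F (G z t) t))) t := by
  intro z t
  set z₀ := G z t
  set B := jacMat (fun w => Finv w t) (F z₀ t)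
  have hFd : DifferentiableAt ℝ (fun w => F w t) z₀ :=
    (hF.differentiable one_ne_zero _).comp_prodMk_const
  have hFinvd : DifferentiableAt ℝ (fun w => Finv w t) (F z₀ t) :=
    (hFinv t).differentiable one_ne_zero _
  have hBA : B * jacMat (fun w => F w t) z₀ = 1 := by
    rw [← jacMat_comp hFinvd hFd, show (fun w => Finv w t) ∘ (fun w => F w t) = id from
      funext fun w => hinv₁ w t, jacMat_id]
  have hKd : HasGradientAt (fun w => K w t) (gradient (fun w => K w t) z₀) (Finv (F z₀ t) t) := by
    rw [hinv₁]
    exact (hK.differentiable one_ne_zero _).comp_prodMk_const.hasGradientAt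
  have hgrad : HasGradientAt (fun w => HK w t)
      (gradient (fun w => H w t) (F z₀ t) +
        WithLp.toLp 2 (Bᵀ *ᵥ (gradient (fun w => K w t) z₀ : Phase n))) (F z₀ t) := by
    rw [show (fun w => HK w t) = fun w => H w t + K (Finv w t) t from funext fun w => hHK w t]
    have hKFinv := hKd.comp_jacMat hFinvd
    exact (hH.differentiable one_ne_zero _).comp_prodMk_const.hasGradientAt.add hKFinv
  rw [hgrad.gradient, Jv_add, Jv_toLp_transpose_mulVec (hsymp z₀ t) hBA, jacMat_mulVec, add_comm]
  exact (hflowG z t).comp_timeDependent (hF.differentiable one_ne_zero _) (hflowF z₀ t)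

/-- **Composition of Hamiltonian flows.** If `(f_t)` is the flow of `H` (each `f_t` a
canonical transformation with `C¹` inverse) and `(g_t)` is the flow of `K`, then
`(f_t ∘ g_t)` is the Hamiltonian flow of `(H#K)(z,t) = H(z,t) + K(f_t⁻¹(z), t)`. -/
theorem composition_of_hamiltonian_flows {n : ℕ}
    (H K : Phase n → ℝ → ℝ)
    (hH : ContDiff ℝ 1 (fun q : Phase n × ℝ => H q.1 q.2))
    (hK : ContDiff ℝ 1 (fun q : Phase n × ℝ => K q.1 q.2))
    (F G : Phase n → ℝ → Phase n)
    (hF : ContDiff ℝ 1 (fun q : Phase n × ℝ => F q.1 q.2))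
    (hG : ContDiff ℝ 1 (fun q : Phase n × ℝ => G q.1 q.2))
    (Finv : Phase n → ℝ → Phase n)
    (hFinv : ∀ t, ContDiff ℝ 1 (fun z => Finv z t))
    (hinv₁ : ∀ (z : Phase n) (t : ℝ), Finv (F z t) t = z)
    (hinv₂ : ∀ (z : Phase n) (t : ℝ), F (Finv z t) t = z)
    (hsymp : ∀ (z : Phase n) (t : ℝ),
      (jacMat (fun w => F w t) z)ᵀ * Jmat n * jacMat (fun w => F w t) z = Jmat n)
    (hflowF : ∀ (z : Phase n) (t : ℝ),
      HasDerivAt (fun s => F z s) (Jv (gradient (fun w => H w t) (F z t))) t)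
    (hflowG : ∀ (z : Phase n) (t : ℝ),
      HasDerivAt (fun s => G z s) (Jv (gradient (fun w => K w t) (G z t))) t)
    (HK : Phase n → ℝ → ℝ)
    (hHK : ∀ (z : Phase n) (t : ℝ), HK z t = H z t + K (Finv z t) t) :
    ∀ (z : Phase n) (t : ℝ),
      HasDerivAt (fun s => F (G z s) s)
        (Jv (gradient (fun w => HK w t) (F (G z t) t))) t :=
  composition_of_hamiltonian_flows_general H K hH hK F G hF Finv hFinv hinv₁ hsymp hflowF hflowG HK
    hHK

end
end

section
/- Let X : ℝ^{2n} × ℝ → ℝ^{2n} be continuously differentiable in z and suppose that for all (z,t) the matrix J·D_zX(z,t) is symmetric (equivalently, D_zX(z,t) belongs to the symplectic Lie algebra sp(2n,ℝ)). Define H(z,t) := −∫₀¹ σ( X(uz,t), z ) du, where σ(z,z') = (Jz)·z'. Then H is differentiable in z and X is the Hamiltonian vector field of H: J∇_z H(z,t) = X(z,t) for all (z,t). -/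
/-!
Put `G = J ∘ X`. Symmetry of `J·D_zX` says that `DG` is self-adjoint, i.e. that the `1`-form
`z ↦ ⟪G z, ·⟫` is closed, so the radial homotopy formula `φ(z) = ∫₀¹ ⟪G(uz), z⟫ du` gives a
potential: differentiating under the integral and using the symmetry of `DG`, the integrand of
`∇φ(z)` is `d/du (u • G(uz))`, which integrates to `G z`. Since `J² = -1`, `H = -φ` satisfies
`J∇H = -J G = X`.
-/

open Matrix intervalIntegral
open scoped RealInnerProductSpace

noncomputable section

/-- The standard symplectic form `σ(z,z') = (Jz)·z'` on phase space. -/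
def symplForm {n : ℕ} (z z' : Phase n) : ℝ := ⟪Jv z, z'⟫

section RadialPotential

variable {E : Type*} [NormedAddCommGroup E] [InnerProductSpace ℝ E] {G : E → E}

theorem HasGradientAt.neg {f : E → ℝ} {f' x : E} [CompleteSpace E] (h : HasGradientAt f f' x) :
    HasGradientAt (fun y => -f y) (-f') x := by
  rw [hasGradientAt_iff_hasFDerivAt, map_neg] at *
  exact HasFDerivAt.neg h

theorem hasDerivAt_smul_comp_smul (hG : Differentiable ℝ G) (z : E) (u : ℝ) :
    HasDerivAt (fun v : ℝ => v • G (v • z)) (G (u • z) + u • fderiv ℝ G (u • z) z) u := by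
  have hline : HasDerivAt (fun v : ℝ => G (v • z)) (fderiv ℝ G (u • z) z) u :=
    (hG _).hasFDerivAt.comp_hasDerivAt u (by simpa using (hasDerivAt_id u).smul_const z)
  have hprod := (hasDerivAt_id' u).smul hline
  rwa [one_smul, add_comm] at hprod

theorem continuous_add_smul_fderiv_comp_smul (hG : ContDiff ℝ 1 G) :
    Continuous fun p : ℝ × E => G (p.1 • p.2) + p.1 • fderiv ℝ G (p.1 • p.2) p.2 := by
  have hsmul : Continuous fun p : ℝ × E => p.1 • p.2 := continuous_fst.smul continuous_snd
  exact (hG.continuous.comp hsmul).add <| continuous_fst.smul <|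
    ((hG.continuous_fderiv one_ne_zero).comp hsmul).clm_apply continuous_snd

theorem integral_add_smul_fderiv_comp_smul [CompleteSpace E] (hG : ContDiff ℝ 1 G) (z : E) :
    ∫ u in (0 : ℝ)..1, (G (u • z) + u • fderiv ℝ G (u • z) z) = G z := by
  have hcont : Continuous fun u : ℝ => G (u • z) + u • fderiv ℝ G (u • z) z :=
    (continuous_add_smul_fderiv_comp_smul hG).comp (continuous_id.prodMk continuous_const)
  rw [integral_eq_sub_of_hasDerivAt (fun u _ => hasDerivAt_smul_comp_smul
    (hG.differentiable one_ne_zero) z u) (hcont.intervalIntegrable 0 1)]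
  simp

theorem hasFDerivAt_inner_comp_smul (hG : Differentiable ℝ G)
    (hsymm : ∀ y, (fderiv ℝ G y : E →ₗ[ℝ] E).IsSymmetric) (u : ℝ) (z : E) :
    HasFDerivAt (fun w => ⟪G (u • w), w⟫)
      (innerSL ℝ (G (u • z) + u • fderiv ℝ G (u • z) z)) z := by
  have hcomp : HasFDerivAt (fun w => G (u • w))
      ((fderiv ℝ G (u • z)).comp (u • ContinuousLinearMap.id ℝ E)) z :=
    (hG _).hasFDerivAt.comp z (u • ContinuousLinearMap.id ℝ E).hasFDerivAt
  refine (hcomp.inner ℝ (hasFDerivAt_id z)).congr_fderiv ?_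
  ext w
  have hflip : ⟪fderiv ℝ G (u • z) w, z⟫ = ⟪fderiv ℝ G (u • z) z, w⟫ :=
    (hsymm (u • z) w z).trans (real_inner_comm _ _)
  simp [inner_smul_left, hflip]

theorem hasGradientAt_integral_inner_comp_smul [ProperSpace E] (hG : ContDiff ℝ 1 G)
    (hsymm : ∀ y, (fderiv ℝ G y : E →ₗ[ℝ] E).IsSymmetric) (z₀ : E) :
    HasGradientAt (fun z => ∫ u in (0 : ℝ)..1, ⟪G (u • z), z⟫) (G z₀) z₀ := by
  have hV := continuous_add_smul_fderiv_comp_smul hG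
  obtain ⟨C, hC⟩ := (isCompact_Icc (a := (0 : ℝ)) (b := 1)).prod
    (isCompact_closedBall z₀ 1) |>.exists_bound_of_continuousOn hV.continuousOn
  have hcont : ∀ z : E, Continuous fun u : ℝ => ⟪G (u • z), z⟫ := fun z =>
    (hG.continuous.comp (continuous_id.smul continuous_const)).inner continuous_const
  have hVz₀ : Continuous fun u : ℝ => G (u • z₀) + u • fderiv ℝ G (u • z₀) z₀ :=
    hV.comp (continuous_id.prodMk continuous_const)
  have hderiv := hasFDerivAt_integral_of_dominated_of_fderiv_le
    (μ := MeasureTheory.volume) (F' := fun z u => innerSL ℝ (G (u • z) + u • fderiv ℝ G (u • z) z))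
    (bound := fun _ => C) (Metric.ball_mem_nhds z₀ one_pos)
    (.of_forall fun z => (hcont z).aestronglyMeasurable) ((hcont z₀).intervalIntegrable 0 1)
    ((innerSL ℝ).continuous.comp hVz₀).aestronglyMeasurable
    (.of_forall fun u hu z hz => by
      rw [Set.uIoc_of_le zero_le_one] at hu
      rw [innerSL_apply_norm]
      exact hC (u, z) ⟨Set.Ioc_subset_Icc_self hu, Metric.ball_subset_closedBall hz⟩)
    intervalIntegrable_const
    (.of_forall fun u _ z _ =>
      hasFDerivAt_inner_comp_smul (hG.differentiable one_ne_zero) hsymm u z)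
  rw [(innerSL ℝ).intervalIntegral_comp_comm (hVz₀.intervalIntegrable 0 1),
    integral_add_smul_fderiv_comp_smul hG] at hderiv
  rw [hasGradientAt_iff_hasFDerivAt]
  exact hderiv.congr_fderiv (by ext; rfl)

end RadialPotential

theorem toEuclideanCLM_Jmat_apply {n : ℕ} (v : Phase n) :
    toEuclideanCLM (𝕜 := ℝ) (Jmat n) v = Jv v :=
  rfl

theorem Jmat_mul_Jmat (n : ℕ) : Jmat n * Jmat n = -1 := by
  simp [Jmat, fromBlocks_multiply, ← fromBlocks_one, fromBlocks_neg]

theorem Jv_neg_Jv {n : ℕ} (v : Phase n) : Jv (-Jv v) = v := by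
  rw [← toEuclideanCLM_Jmat_apply, ← toEuclideanCLM_Jmat_apply, map_neg,
    ← mul_apply_eq_comp, ← map_mul, Jmat_mul_Jmat, map_neg, map_one]
  simp

theorem toEuclideanCLM_jacMat {n : ℕ} (f : Phase n → Phase n) (z : Phase n) :
    toEuclideanCLM (𝕜 := ℝ) (jacMat f z) = fderiv ℝ f z := by
  apply ContinuousLinearMap.coe_injective
  rw [coe_toEuclideanCLM_eq_toEuclideanLin, toEuclideanLin_eq_toLin_orthonormal,
    jacMat, toLin_toMatrix]

/-- `J·D f(z)` is the matrix of `D(J ∘ f)(z)`. -/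
theorem isSymmetric_fderiv_Jv_comp {n : ℕ} {f : Phase n → Phase n} {z : Phase n}
    (hf : DifferentiableAt ℝ f z) (hsymm : (Jmat n * jacMat f z)ᵀ = Jmat n * jacMat f z) :
    (fderiv ℝ (fun w => Jv (f w)) z : Phase n →ₗ[ℝ] Phase n).IsSymmetric := by
  have hderiv : fderiv ℝ (fun w => Jv (f w)) z = toEuclideanCLM (𝕜 := ℝ) (Jmat n * jacMat f z) := by
    rw [map_mul, toEuclideanCLM_jacMat]
    exact ((toEuclideanCLM (𝕜 := ℝ) (Jmat n)).hasFDerivAt.comp z hf.hasFDerivAt).fderiv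
  rw [hderiv, coe_toEuclideanCLM_eq_toEuclideanLin, isSymmetric_toEuclideanLin_iff, IsHermitian,
    conjTranspose_eq_transpose_of_trivial, hsymm]

/-- **Reconstruction of the Hamiltonian from its vector field.** If `X(z,t)` is `C¹` in `z`
and `J·D_zX(z,t)` is symmetric for all `(z,t)` (i.e. `D_zX(z,t) ∈ sp(2n,ℝ)`), then
`H(z,t) = −∫₀¹ σ(X(uz,t), z) du` is differentiable in `z` and `X` is the Hamiltonian
vector field of `H`: `J∇_zH = X`. -/
theorem hamiltonian_vector_field_reconstruction {n : ℕ}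
    (X : Phase n → ℝ → Phase n)
    (hX : ∀ t, ContDiff ℝ 1 (fun z => X z t))
    (hsymm : ∀ (z : Phase n) (t : ℝ),
      (Jmat n * jacMat (fun w => X w t) z)ᵀ = Jmat n * jacMat (fun w => X w t) z)
    (H : Phase n → ℝ → ℝ)
    (hH : ∀ (z : Phase n) (t : ℝ),
      H z t = -∫ u in (0:ℝ)..1, symplForm (X (u • z) t) z) :
    (∀ t, Differentiable ℝ (fun z => H z t)) ∧
      ∀ (z : Phase n) (t : ℝ), Jv (gradient (fun w => H w t) z) = X z t := by
  have hgrad : ∀ z t, HasGradientAt (fun w => H w t) (-Jv (X z t)) z := by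
    intro z t
    have hG : ContDiff ℝ 1 (fun w => Jv (X w t)) :=
      (toEuclideanCLM (𝕜 := ℝ) (Jmat n)).contDiff.comp (hX t)
    have hpot := hasGradientAt_integral_inner_comp_smul hG (fun y =>
      isSymmetric_fderiv_Jv_comp ((hX t).differentiable one_ne_zero y) (hsymm y t)) z
    simpa only [hH, symplForm] using hpot.neg
  refine ⟨fun t z => (hgrad z t).differentiableAt, fun z t => ?_⟩
  rw [(hgrad z t).gradient, Jv_neg_Jv]

end
end
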